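/- arXiv:2307.05802 — 2 statements merged into one kernel-verified Lean document; each statement's English description precedes it below -/
import Mathlib

section
/- Let μ, ν be Borel probability measures on a separable Hilbert space X with finite p-th moments. The map θ ↦ W_p(P_θ#μ, P_θ#ν) on the unit sphere S = {θ : ‖θ‖ = 1} is Lipschitz with Lipschitz constant (M_p(μ))^{1/p} + (M_p(ν))^{1/p}. -/
open MeasureTheory ENNReal Metric Filter
open scoped NNReal Topology

noncomputable section

/-- The `p`-cost of a transport plan `π`. -/
def transportCostE {E : Type*} [MeasurableSpace E] [Dist E] (p : ℝ)
    (π : Measure (E × E)) : ℝ≥0∞ :=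
  ∫⁻ z, ENNReal.ofReal (dist z.1 z.2 ^ p) ∂π

/-- The `p`-th power of the `p`-Wasserstein distance, as an extended real:
the infimum of the `p`-cost over all couplings of `μ` and `ν`. -/
def WassersteinE {E : Type*} [MeasurableSpace E] [Dist E] (p : ℝ)
    (μ ν : Measure E) : ℝ≥0∞ :=
  ⨅ (π : Measure (E × E)) (_ : π.map Prod.fst = μ) (_ : π.map Prod.snd = ν),
    transportCostE p π

/-- The `p`-Wasserstein distance. -/
def Wp {E : Type*} [MeasurableSpace E] [Dist E] (p : ℝ) (μ ν : Measure E) : ℝ :=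
  (WassersteinE p μ ν).toReal ^ (1 / p)

/-- The `p`-th moment, as an extended real. -/
def MpE {E : Type*} [MeasurableSpace E] [Norm E] (p : ℝ) (μ : Measure E) : ℝ≥0∞ :=
  ∫⁻ x, ENNReal.ofReal (‖x‖ ^ p) ∂μ

/-- The `p`-th moment `M_p(μ) = ∫ ‖x‖^p dμ`. -/
def Mp {E : Type*} [MeasurableSpace E] [Norm E] (p : ℝ) (μ : Measure E) : ℝ :=
  (MpE p μ).toReal

/-- The projection `P_θ(x) = ⟨θ, x⟩`. -/
def proj {X : Type*} [NormedAddCommGroup X] [InnerProductSpace ℝ X] (θ : X) (x : X) : ℝ :=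
  inner ℝ θ x

/-- The `p`-th power of the sliced Wasserstein distance with respect to the measure `γS`
on the unit sphere, as an extended real. -/
def SWpE {X : Type*} [NormedAddCommGroup X] [InnerProductSpace ℝ X] [MeasurableSpace X]
    (p : ℝ) (γS : Measure (sphere (0 : X) 1)) (μ ν : Measure X) : ℝ≥0∞ :=
  (γS Set.univ)⁻¹ *
    ∫⁻ θ, WassersteinE p (μ.map (proj (θ : X))) (ν.map (proj (θ : X))) ∂γS

/-- The sliced Wasserstein distance with respect to the measure `γS` on the unit sphere. -/
def SWp {X : Type*} [NormedAddCommGroup X] [InnerProductSpace ℝ X] [MeasurableSpace X]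
    (p : ℝ) (γS : Measure (sphere (0 : X) 1)) (μ ν : Measure X) : ℝ :=
  (SWpE p γS μ ν).toReal ^ (1 / p)

/-- Empirical measure of the first `n` samples `ξ 0, ..., ξ (n-1)` evaluated at `ω`. -/
def empMeasure {Ω E : Type*} [MeasurableSpace E] (ξ : ℕ → Ω → E) (n : ℕ) (ω : Ω) :
    Measure E :=
  (n : ℝ≥0∞)⁻¹ • ∑ k ∈ Finset.range n, Measure.dirac (ξ k ω)

end
open ProbabilityTheory

section Aux

variable {p : ℝ}

lemma my_iInf_rpow {ι : Sort*} (f : ι → ℝ≥0∞) {q : ℝ} (hq : 0 < q) :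
    (⨅ i, f i) ^ q = ⨅ i, f i ^ q :=
  OrderIso.map_iInf (ENNReal.orderIsoRpow q hq) f

lemma my_le_iInf_add_iInf {ι κ : Sort*} {f : ι → ℝ≥0∞} {g : κ → ℝ≥0∞} {c : ℝ≥0∞}
    (h : ∀ i j, c ≤ f i + g j) : c ≤ (⨅ i, f i) + ⨅ j, g j := by
  rw [ENNReal.iInf_add]
  refine le_iInf fun i => ?_
  rw [ENNReal.add_iInf]
  exact le_iInf fun j => h i j

lemma wE_le_cost {E : Type*} [MeasurableSpace E] [Dist E] {μ ν : Measure E} (p : ℝ)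
    {π : Measure (E × E)} (h1 : π.map Prod.fst = μ) (h2 : π.map Prod.snd = ν) :
    WassersteinE p μ ν ≤ transportCostE p π :=
  iInf_le_of_le π (iInf_le_of_le h1 (iInf_le _ h2))

lemma meas_cost (p : ℝ) : Measurable fun z : ℝ × ℝ => ENNReal.ofReal (dist z.1 z.2 ^ p) :=
  ((measurable_fst.dist measurable_snd).pow measurable_const).ennreal_ofReal

lemma ofReal_dist_rpow (hp0 : 0 ≤ p) (x y : ℝ) :
    ENNReal.ofReal (dist x y ^ p) = edist x y ^ p := by
  rw [edist_dist, ENNReal.ofReal_rpow_of_nonneg dist_nonneg hp0]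

lemma prob_of_coupling {π : Measure (ℝ × ℝ)} {μ : Measure ℝ} [IsProbabilityMeasure μ]
    (h : π.map Prod.fst = μ) : IsProbabilityMeasure π := by
  constructor
  have : (π.map Prod.fst) Set.univ = 1 := by rw [h]; exact measure_univ
  rwa [Measure.map_apply measurable_fst MeasurableSet.univ, Set.preimage_univ] at this

end Aux

section Triangle

variable {p : ℝ}

lemma glue_est (hp : 1 ≤ p) {μ ν ρ : Measure ℝ} [IsProbabilityMeasure μ]
    [IsProbabilityMeasure ν] [IsProbabilityMeasure ρ]
    (π₁ : Measure (ℝ × ℝ)) (h1f : π₁.map Prod.fst = μ) (h1s : π₁.map Prod.snd = ν)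
    (π₂ : Measure (ℝ × ℝ)) (h2f : π₂.map Prod.fst = ν) (h2s : π₂.map Prod.snd = ρ) :
    WassersteinE p μ ρ ^ (1 / p) ≤
      transportCostE p π₁ ^ (1 / p) + transportCostE p π₂ ^ (1 / p) := by
  have hp0 : (0 : ℝ) < p := lt_of_lt_of_le one_pos hp
  have hs : (0 : ℝ) < 1 / p := by positivity
  haveI : IsProbabilityMeasure π₁ := prob_of_coupling h1f
  haveI : IsProbabilityMeasure π₂ := prob_of_coupling h2f
  set κ : Kernel ℝ ℝ := π₂.condKernel with hκ
  have hdis : π₂.fst ⊗ₘ κ = π₂ := Measure.disintegrate (ρ := π₂) (ρCond := κ)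
  have hfst : π₂.fst = ν := h2f
  set κ' : Kernel (ℝ × ℝ) ℝ := κ.comap Prod.snd measurable_snd with hκ'
  set τ : Measure ((ℝ × ℝ) × ℝ) := π₁ ⊗ₘ κ' with hτ
  have hτ1 : τ.map Prod.fst = π₁ := Measure.fst_compProd π₁ κ'
  have hm2 : Measurable fun w : (ℝ × ℝ) × ℝ => (w.1.2, w.2) :=
    (measurable_fst.snd.prodMk measurable_snd)
  have hτ2 : τ.map (fun w => (w.1.2, w.2)) = π₂ := by
    refine Measure.ext fun s hs' => ?_
    rw [Measure.map_apply hm2 hs', hτ, Measure.compProd_apply (hm2 hs'),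
      ← hdis, Measure.compProd_apply hs', hfst, ← h1s,
      lintegral_map (Kernel.measurable_kernel_prodMk_left hs') measurable_snd]
    rfl
  set γ : Measure (ℝ × ℝ) := τ.map (fun w => (w.1.1, w.2)) with hγ
  have hmγ : Measurable fun w : (ℝ × ℝ) × ℝ => (w.1.1, w.2) :=
    measurable_fst.fst.prodMk measurable_snd
  have hγ1 : γ.map Prod.fst = μ := by
    rw [hγ, Measure.map_map measurable_fst hmγ,
      show (Prod.fst ∘ fun w : (ℝ × ℝ) × ℝ => (w.1.1, w.2)) = Prod.fst ∘ Prod.fst from rfl,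
      ← Measure.map_map measurable_fst measurable_fst, hτ1, h1f]
  have hγ2 : γ.map Prod.snd = ρ := by
    rw [hγ, Measure.map_map measurable_snd hmγ,
      show (Prod.snd ∘ fun w : (ℝ × ℝ) × ℝ => (w.1.1, w.2))
        = Prod.snd ∘ fun w : (ℝ × ℝ) × ℝ => (w.1.2, w.2) from rfl,
      ← Measure.map_map measurable_snd hm2, hτ2, h2s]
  have hWle : WassersteinE p μ ρ ≤ transportCostE p γ := wE_le_cost p hγ1 hγ2
  have hcostγ : transportCostE p γ = ∫⁻ w, edist w.1.1 w.2 ^ p ∂τ := by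
    rw [transportCostE, hγ, lintegral_map (meas_cost p) hmγ]
    exact lintegral_congr fun w => ofReal_dist_rpow hp0.le _ _
  have hcost1 : ∫⁻ w, edist w.1.1 w.1.2 ^ p ∂τ = transportCostE p π₁ := by
    rw [transportCostE, ← hτ1, lintegral_map (meas_cost p) measurable_fst]
    exact lintegral_congr fun w => (ofReal_dist_rpow hp0.le _ _).symm
  have hcost2 : ∫⁻ w, edist w.1.2 w.2 ^ p ∂τ = transportCostE p π₂ := by
    rw [transportCostE, ← hτ2, lintegral_map (meas_cost p) hm2]
    exact lintegral_congr fun w => (ofReal_dist_rpow hp0.le _ _).symm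
  have hf : Measurable fun w : (ℝ × ℝ) × ℝ => edist w.1.1 w.1.2 :=
    measurable_fst.fst.edist measurable_fst.snd
  have hg : Measurable fun w : (ℝ × ℝ) × ℝ => edist w.1.2 w.2 :=
    measurable_fst.snd.edist measurable_snd
  calc WassersteinE p μ ρ ^ (1 / p) ≤ transportCostE p γ ^ (1 / p) :=
        ENNReal.rpow_le_rpow hWle hs.le
    _ = (∫⁻ w, edist w.1.1 w.2 ^ p ∂τ) ^ (1 / p) := by rw [hcostγ]
    _ ≤ (∫⁻ w, ((fun w : (ℝ × ℝ) × ℝ => edist w.1.1 w.1.2)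
          + fun w : (ℝ × ℝ) × ℝ => edist w.1.2 w.2) w ^ p ∂τ) ^ (1 / p) := by
        refine ENNReal.rpow_le_rpow (lintegral_mono fun w => ?_) hs.le
        exact ENNReal.rpow_le_rpow (edist_triangle _ _ _) hp0.le
    _ ≤ (∫⁻ w, edist w.1.1 w.1.2 ^ p ∂τ) ^ (1 / p)
          + (∫⁻ w, edist w.1.2 w.2 ^ p ∂τ) ^ (1 / p) :=
        ENNReal.lintegral_Lp_add_le hf.aemeasurable hg.aemeasurable hp
    _ = transportCostE p π₁ ^ (1 / p) + transportCostE p π₂ ^ (1 / p) := by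
        rw [hcost1, hcost2]

lemma wE_triangle (hp : 1 ≤ p) (μ ν ρ : Measure ℝ) [IsProbabilityMeasure μ]
    [IsProbabilityMeasure ν] [IsProbabilityMeasure ρ] :
    WassersteinE p μ ρ ^ (1 / p) ≤
      WassersteinE p μ ν ^ (1 / p) + WassersteinE p ν ρ ^ (1 / p) := by
  have hs : (0 : ℝ) < 1 / p := by positivity
  conv_rhs => rw [WassersteinE, WassersteinE]
  simp only [my_iInf_rpow _ hs]
  refine my_le_iInf_add_iInf fun π₁ π₂ => ?_
  refine my_le_iInf_add_iInf fun h1f h2f => ?_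
  refine my_le_iInf_add_iInf fun h1s h2s => ?_
  exact glue_est hp π₁ h1f h1s π₂ h2f h2s

end Triangle

section Proj

variable {p : ℝ} {X : Type*} [NormedAddCommGroup X] [InnerProductSpace ℝ X]
  [MeasurableSpace X] [OpensMeasurableSpace X]

lemma meas_proj (θ : X) : Measurable (proj θ) :=
  (continuous_const.inner continuous_id).measurable

lemma wE_proj_le (hp : 1 ≤ p) (α : Measure X) (θ η : X) :
    WassersteinE p (α.map (proj θ)) (α.map (proj η)) ≤
      ENNReal.ofReal (‖θ - η‖ ^ p) * MpE p α := by
  have hp0 : (0 : ℝ) ≤ p := le_trans zero_le_one hp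
  have hT : Measurable fun x => (proj θ x, proj η x) :=
    (meas_proj θ).prodMk (meas_proj η)
  refine le_trans (wE_le_cost p (π := α.map fun x => (proj θ x, proj η x)) ?_ ?_) ?_
  · rw [Measure.map_map measurable_fst hT]; rfl
  · rw [Measure.map_map measurable_snd hT]; rfl
  · rw [transportCostE, lintegral_map (meas_cost p) hT, MpE,
      ← lintegral_const_mul _ ((measurable_norm.pow measurable_const).ennreal_ofReal)]
    refine lintegral_mono fun x => ?_
    rw [← ENNReal.ofReal_mul (by positivity)]
    refine ENNReal.ofReal_le_ofReal ?_
    rw [Real.dist_eq]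
    calc |proj θ x - proj η x| ^ p ≤ (‖θ - η‖ * ‖x‖) ^ p := by
          refine Real.rpow_le_rpow (abs_nonneg _) ?_ hp0
          rw [show proj θ x - proj η x = inner ℝ (θ - η) x from (inner_sub_left _ _ _).symm]
          exact abs_real_inner_le_norm _ _
      _ = ‖θ - η‖ ^ p * ‖x‖ ^ p := Real.mul_rpow (norm_nonneg _) (norm_nonneg _)

lemma MpE_proj_le (hp : 1 ≤ p) (α : Measure X) {θ : X} (hθ : ‖θ‖ = 1) :
    MpE p (α.map (proj θ)) ≤ MpE p α := by
  have hp0 : (0 : ℝ) ≤ p := le_trans zero_le_one hp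
  rw [MpE, lintegral_map ((measurable_norm.pow measurable_const).ennreal_ofReal) (meas_proj θ)]
  refine lintegral_mono fun x => ?_
  refine ENNReal.ofReal_le_ofReal (Real.rpow_le_rpow (norm_nonneg _) ?_ hp0)
  rw [Real.norm_eq_abs]
  calc |proj θ x| ≤ ‖θ‖ * ‖x‖ := abs_real_inner_le_norm _ _
    _ = ‖x‖ := by rw [hθ, one_mul]

end Proj

section Dirac

variable {p : ℝ}

lemma wE_dirac_le (p : ℝ) (m : Measure ℝ) [IsProbabilityMeasure m] :
    WassersteinE p m (Measure.dirac 0) ≤ MpE p m := by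
  have hT : Measurable fun x : ℝ => (x, (0 : ℝ)) := measurable_id.prodMk measurable_const
  refine le_trans (wE_le_cost p (π := m.map fun x => (x, (0 : ℝ))) ?_ ?_) ?_
  · rw [Measure.map_map measurable_fst hT]; exact Measure.map_id
  · rw [Measure.map_map measurable_snd hT]
    show m.map (fun _ => (0 : ℝ)) = _
    simp [Measure.map_const]
  · rw [transportCostE, lintegral_map (meas_cost p) hT, MpE]
    refine lintegral_mono fun x => ?_
    simp [dist_zero_right]

lemma wE_dirac_le' (p : ℝ) (m : Measure ℝ) [IsProbabilityMeasure m] :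
    WassersteinE p (Measure.dirac 0) m ≤ MpE p m := by
  have hT : Measurable fun x : ℝ => ((0 : ℝ), x) := measurable_const.prodMk measurable_id
  refine le_trans (wE_le_cost p (π := m.map fun x => ((0 : ℝ), x)) ?_ ?_) ?_
  · rw [Measure.map_map measurable_fst hT]
    show m.map (fun _ => (0 : ℝ)) = _
    simp [Measure.map_const]
  · rw [Measure.map_map measurable_snd hT]; exact Measure.map_id
  · rw [transportCostE, lintegral_map (meas_cost p) hT, MpE]
    refine lintegral_mono fun x => ?_
    simp [dist_zero_left]

lemma wE_lt_top (hp : 1 ≤ p) (m₁ m₂ : Measure ℝ) [IsProbabilityMeasure m₁]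
    [IsProbabilityMeasure m₂] (h1 : MpE p m₁ < ⊤) (h2 : MpE p m₂ < ⊤) :
    WassersteinE p m₁ m₂ < ⊤ := by
  have hs : (0 : ℝ) < 1 / p := by positivity
  have htri := wE_triangle hp m₁ (Measure.dirac 0) m₂
  have hA : WassersteinE p m₁ (Measure.dirac 0) ^ (1 / p) ≠ ⊤ :=
    ENNReal.rpow_ne_top_of_nonneg hs.le ((wE_dirac_le p m₁).trans_lt h1).ne
  have hB : WassersteinE p (Measure.dirac 0) m₂ ^ (1 / p) ≠ ⊤ :=
    ENNReal.rpow_ne_top_of_nonneg hs.le ((wE_dirac_le' p m₂).trans_lt h2).ne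
  have h3 : WassersteinE p m₁ m₂ ^ (1 / p) ≠ ⊤ :=
    ne_top_of_le_ne_top (ENNReal.add_ne_top.2 ⟨hA, hB⟩) htri
  by_contra h
  rw [not_lt, top_le_iff] at h
  rw [h, ENNReal.top_rpow_of_pos hs] at h3
  exact h3 rfl

end Dirac

section Key

variable {p : ℝ} {X : Type*} [NormedAddCommGroup X] [InnerProductSpace ℝ X]
  [MeasurableSpace X] [OpensMeasurableSpace X]

lemma wE_proj_rpow_le (hp : 1 ≤ p) (α : Measure X) (hα : MpE p α < ⊤) (θ η : X) :
    WassersteinE p (α.map (proj θ)) (α.map (proj η)) ^ (1 / p) ≤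
      ENNReal.ofReal (Mp p α ^ (1 / p) * ‖θ - η‖) := by
  have hp0 : (0 : ℝ) < p := lt_of_lt_of_le one_pos hp
  have hs : (0 : ℝ) < 1 / p := by positivity
  calc WassersteinE p (α.map (proj θ)) (α.map (proj η)) ^ (1 / p)
      ≤ (ENNReal.ofReal (‖θ - η‖ ^ p) * MpE p α) ^ (1 / p) :=
        ENNReal.rpow_le_rpow (wE_proj_le hp α θ η) hs.le
    _ = ENNReal.ofReal (‖θ - η‖ ^ p) ^ (1 / p) * MpE p α ^ (1 / p) :=
        ENNReal.mul_rpow_of_nonneg _ _ hs.le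
    _ = ENNReal.ofReal ‖θ - η‖ * ENNReal.ofReal (Mp p α ^ (1 / p)) := by
        rw [← ENNReal.ofReal_rpow_of_nonneg (norm_nonneg _) hp0.le, ← ENNReal.rpow_mul,
          mul_one_div_cancel hp0.ne', ENNReal.rpow_one]
        congr 1
        rw [Mp, ENNReal.toReal_rpow,
          ENNReal.ofReal_toReal (ENNReal.rpow_ne_top_of_nonneg hs.le hα.ne)]
    _ = ENNReal.ofReal (Mp p α ^ (1 / p) * ‖θ - η‖) := by
        rw [← ENNReal.ofReal_mul (norm_nonneg _), mul_comm]

lemma key_est (hp : 1 ≤ p) (μ ν : Measure X) [IsProbabilityMeasure μ] [IsProbabilityMeasure ν]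
    (hμ : MpE p μ < ⊤) (hν : MpE p ν < ⊤) (θ η : X) :
    WassersteinE p (μ.map (proj θ)) (ν.map (proj θ)) ^ (1 / p) ≤
      WassersteinE p (μ.map (proj η)) (ν.map (proj η)) ^ (1 / p) +
        ENNReal.ofReal ((Mp p μ ^ (1 / p) + Mp p ν ^ (1 / p)) * ‖θ - η‖) := by
  have hs : (0 : ℝ) < 1 / p := by positivity
  haveI h1 : IsProbabilityMeasure (μ.map (proj θ)) :=
    Measure.isProbabilityMeasure_map (meas_proj θ).aemeasurable
  haveI h2 : IsProbabilityMeasure (μ.map (proj η)) :=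
    Measure.isProbabilityMeasure_map (meas_proj η).aemeasurable
  haveI h3 : IsProbabilityMeasure (ν.map (proj θ)) :=
    Measure.isProbabilityMeasure_map (meas_proj θ).aemeasurable
  haveI h4 : IsProbabilityMeasure (ν.map (proj η)) :=
    Measure.isProbabilityMeasure_map (meas_proj η).aemeasurable
  have hMμ : (0 : ℝ) ≤ Mp p μ ^ (1 / p) * ‖θ - η‖ :=
    mul_nonneg (Real.rpow_nonneg ENNReal.toReal_nonneg _) (norm_nonneg _)
  have hMν : (0 : ℝ) ≤ Mp p ν ^ (1 / p) * ‖θ - η‖ :=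
    mul_nonneg (Real.rpow_nonneg ENNReal.toReal_nonneg _) (norm_nonneg _)
  calc WassersteinE p (μ.map (proj θ)) (ν.map (proj θ)) ^ (1 / p)
      ≤ WassersteinE p (μ.map (proj θ)) (μ.map (proj η)) ^ (1 / p) +
          WassersteinE p (μ.map (proj η)) (ν.map (proj θ)) ^ (1 / p) :=
        wE_triangle hp _ _ _
    _ ≤ WassersteinE p (μ.map (proj θ)) (μ.map (proj η)) ^ (1 / p) +
          (WassersteinE p (μ.map (proj η)) (ν.map (proj η)) ^ (1 / p) +
            WassersteinE p (ν.map (proj η)) (ν.map (proj θ)) ^ (1 / p)) :=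
        add_le_add_right (wE_triangle hp _ _ _) _
    _ ≤ ENNReal.ofReal (Mp p μ ^ (1 / p) * ‖θ - η‖) +
          (WassersteinE p (μ.map (proj η)) (ν.map (proj η)) ^ (1 / p) +
            ENNReal.ofReal (Mp p ν ^ (1 / p) * ‖θ - η‖)) := by
        refine add_le_add (wE_proj_rpow_le hp μ hμ θ η) (add_le_add_right ?_ _)
        have := wE_proj_rpow_le hp ν hν η θ
        rwa [norm_sub_rev] at this
    _ = WassersteinE p (μ.map (proj η)) (ν.map (proj η)) ^ (1 / p) +
          ENNReal.ofReal ((Mp p μ ^ (1 / p) + Mp p ν ^ (1 / p)) * ‖θ - η‖) := by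
        rw [add_mul, ENNReal.ofReal_add hMμ hMν]
        ring

end Key


/-- `θ ↦ W_p(P_θ#μ, P_θ#ν)` is Lipschitz on the unit sphere with
constant `M_p(μ)^{1/p} + M_p(ν)^{1/p}`. -/
theorem stmt3 {X : Type*} [NormedAddCommGroup X] [InnerProductSpace ℝ X]
    [CompleteSpace X] [SecondCountableTopology X] [MeasurableSpace X] [BorelSpace X]
    (p : ℝ) (hp : 1 ≤ p) (μ ν : Measure X) [IsProbabilityMeasure μ] [IsProbabilityMeasure ν]
    (hμ : MpE p μ < ⊤) (hν : MpE p ν < ⊤) :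
    LipschitzWith (Real.toNNReal ((Mp p μ) ^ (1 / p) + (Mp p ν) ^ (1 / p)))
      (fun θ : sphere (0 : X) 1 => Wp p (μ.map (proj (θ : X))) (ν.map (proj (θ : X)))) := by
  have hp0 : (0 : ℝ) < p := lt_of_lt_of_le one_pos hp
  have hs : (0 : ℝ) < 1 / p := by positivity
  set L : ℝ := Mp p μ ^ (1 / p) + Mp p ν ^ (1 / p) with hLdef
  have hL0 : 0 ≤ L :=
    add_nonneg (Real.rpow_nonneg ENNReal.toReal_nonneg _)
      (Real.rpow_nonneg ENNReal.toReal_nonneg _)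
  have hfin : ∀ ζ : sphere (0 : X) 1,
      WassersteinE p (μ.map (proj (ζ : X))) (ν.map (proj (ζ : X))) ^ (1 / p) ≠ ⊤ := by
    intro ζ
    have hζ : ‖(ζ : X)‖ = 1 := mem_sphere_zero_iff_norm.mp ζ.2
    haveI : IsProbabilityMeasure (μ.map (proj (ζ : X))) :=
      Measure.isProbabilityMeasure_map (meas_proj _).aemeasurable
    haveI : IsProbabilityMeasure (ν.map (proj (ζ : X))) :=
      Measure.isProbabilityMeasure_map (meas_proj _).aemeasurable
    exact ENNReal.rpow_ne_top_of_nonneg hs.le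
      (wE_lt_top hp _ _ ((MpE_proj_le hp μ hζ).trans_lt hμ)
        ((MpE_proj_le hp ν hζ).trans_lt hν)).ne
  have step : ∀ ζ₁ ζ₂ : sphere (0 : X) 1,
      (WassersteinE p (μ.map (proj (ζ₁ : X))) (ν.map (proj (ζ₁ : X))) ^ (1 / p)).toReal -
        (WassersteinE p (μ.map (proj (ζ₂ : X))) (ν.map (proj (ζ₂ : X))) ^ (1 / p)).toReal ≤
        L * ‖(ζ₁ : X) - (ζ₂ : X)‖ := by
    intro ζ₁ ζ₂
    have key := key_est hp μ ν hμ hν (ζ₁ : X) (ζ₂ : X)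
    have h1 := ENNReal.toReal_mono
      (ENNReal.add_ne_top.2 ⟨hfin ζ₂, ENNReal.ofReal_ne_top⟩) key
    rw [ENNReal.toReal_add (hfin ζ₂) ENNReal.ofReal_ne_top,
      ENNReal.toReal_ofReal (mul_nonneg hL0 (norm_nonneg _))] at h1
    linarith
  refine LipschitzWith.of_dist_le_mul fun θ η => ?_
  rw [Real.coe_toNNReal _ hL0]
  have hdist : dist θ η = ‖(θ : X) - (η : X)‖ := by rw [Subtype.dist_eq, dist_eq_norm]
  have hWp : ∀ ζ : sphere (0 : X) 1, Wp p (μ.map (proj (ζ : X))) (ν.map (proj (ζ : X))) =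
      (WassersteinE p (μ.map (proj (ζ : X))) (ν.map (proj (ζ : X))) ^ (1 / p)).toReal :=
    fun ζ => by rw [Wp, ENNReal.toReal_rpow]
  rw [Real.dist_eq, hWp θ, hWp η, abs_sub_le_iff, hdist]
  refine ⟨step θ η, ?_⟩
  rw [norm_sub_rev]
  exact step η θ
end

section
/- In an infinite-dimensional separable Hilbert space X with orthonormal basis {e_n}, let μ = δ_0 and μ^n = δ_{n^{1/3} e_n}. Then for every unit vector θ, W_2^2(P_θ#μ^n, P_θ#μ) = n^{2/3}|⟨θ, e_n⟩|^2, the second moments satisfy M_2(μ^n) = n^{2/3} → ∞, and μ^n does not converge narrowly to μ. -/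
open MeasureTheory ENNReal Metric Filter
open scoped NNReal Topology

lemma wE_dirac (p : ℝ) (hp : 0 ≤ p) (a c : ℝ) :
    WassersteinE p (Measure.dirac a) (Measure.dirac c)
      = ENNReal.ofReal (dist a c ^ p) := by
  have hmeas : Measurable fun z : ℝ × ℝ => ENNReal.ofReal (dist z.1 z.2 ^ p) :=
    ((Real.continuous_rpow_const hp).measurable.comp
      (measurable_fst.dist measurable_snd)).ennreal_ofReal
  apply le_antisymm
  · refine iInf_le_of_le (Measure.dirac (a, c)) ?_
    refine iInf_le_of_le (by rw [Measure.map_dirac' measurable_fst]) ?_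
    refine iInf_le_of_le (by rw [Measure.map_dirac' measurable_snd]) ?_
    rw [transportCostE, lintegral_dirac' _ hmeas]
  · refine le_iInf fun π => le_iInf fun h1 => le_iInf fun h2 => ?_
    have ha : ∀ᵐ z : ℝ × ℝ ∂π, z.1 = a := by
      rw [ae_iff]
      have : {z : ℝ × ℝ | ¬ z.1 = a} = Prod.fst ⁻¹' {a}ᶜ := rfl
      rw [this, ← Measure.map_apply measurable_fst (measurableSet_singleton a).compl, h1]
      simp
    have hc : ∀ᵐ z : ℝ × ℝ ∂π, z.2 = c := by
      rw [ae_iff]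
      have : {z : ℝ × ℝ | ¬ z.2 = c} = Prod.snd ⁻¹' {c}ᶜ := rfl
      rw [this, ← Measure.map_apply measurable_snd (measurableSet_singleton c).compl, h2]
      simp
    have huniv : π Set.univ = 1 := by
      have := congrArg (fun m : Measure ℝ => m Set.univ) h1
      simpa [Measure.map_apply measurable_fst MeasurableSet.univ] using this
    have : transportCostE p π = ENNReal.ofReal (dist a c ^ p) * π Set.univ := by
      rw [transportCostE, ← lintegral_const]
      refine lintegral_congr_ae ?_
      filter_upwards [ha, hc] with z hz1 hz2
      rw [hz1, hz2]
    rw [this, huniv, mul_one]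

lemma wp_two_dirac (a c : ℝ) :
    Wp 2 (Measure.dirac a) (Measure.dirac c) = dist a c := by
  rw [Wp, wE_dirac 2 (by norm_num), ENNReal.toReal_ofReal (Real.rpow_nonneg dist_nonneg 2),
    ← Real.rpow_mul dist_nonneg]
  norm_num


/-- the counterexample `μ = δ_0`, `μ^n = δ_{n^{1/3} e_n}`:
`W_2²(P_θ#μ^n, P_θ#μ) = n^{2/3}⟨θ,e_n⟩²` for every unit vector `θ`, the second moments
`M_2(μ^n) = n^{2/3}` tend to infinity, and `μ^n` does not converge narrowly to `μ`. -/
theorem stmt15 {X : Type*} [NormedAddCommGroup X] [InnerProductSpace ℝ X]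
    [CompleteSpace X] [SecondCountableTopology X] [MeasurableSpace X] [BorelSpace X]
    (b : HilbertBasis ℕ ℝ X)
    (μs : ℕ → Measure X) (μ : Measure X)
    (hμs : ∀ n : ℕ, μs n = Measure.dirac (((n : ℝ) ^ ((1 : ℝ) / 3)) • (b n : X)))
    (hμ : μ = Measure.dirac (0 : X)) :
    (∀ n : ℕ, ∀ θ : sphere (0 : X) 1,
        (Wp 2 ((μs n).map (proj (θ : X))) (μ.map (proj (θ : X)))) ^ (2 : ℝ) =
          (n : ℝ) ^ ((2 : ℝ) / 3) * (inner ℝ (θ : X) (b n) : ℝ) ^ 2) ∧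
    (∀ n : ℕ, Mp 2 (μs n) = (n : ℝ) ^ ((2 : ℝ) / 3)) ∧
    Tendsto (fun n => Mp 2 (μs n)) atTop atTop ∧
    ¬ (∀ f : BoundedContinuousFunction X ℝ,
        Tendsto (fun n => ∫ x, f x ∂(μs n)) atTop (𝓝 (∫ x, f x ∂μ))) := by
  have hn13 : ∀ n : ℕ, (0:ℝ) ≤ (n : ℝ) ^ ((1:ℝ)/3) :=
    fun n => Real.rpow_nonneg (Nat.cast_nonneg n) _
  have hpow : ∀ n : ℕ, ((n : ℝ) ^ ((1:ℝ)/3)) ^ (2:ℕ) = (n : ℝ) ^ ((2:ℝ)/3) := by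
    intro n
    rw [← Real.rpow_natCast ((n : ℝ) ^ ((1:ℝ)/3)) 2, ← Real.rpow_mul (Nat.cast_nonneg n)]
    norm_num
  have hMp : ∀ n : ℕ, Mp 2 (μs n) = (n : ℝ) ^ ((2 : ℝ) / 3) := by
    intro n
    have hmeas : Measurable fun x : X => ENNReal.ofReal (‖x‖ ^ (2:ℝ)) :=
      ((Real.continuous_rpow_const (by norm_num)).measurable.comp
        measurable_norm).ennreal_ofReal
    rw [Mp, MpE, hμs n, lintegral_dirac' _ hmeas, norm_smul,
      Real.norm_eq_abs, abs_of_nonneg (hn13 n), b.orthonormal.1 n, mul_one,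
      ENNReal.toReal_ofReal (Real.rpow_nonneg (hn13 n) _),
      ← Real.rpow_mul (Nat.cast_nonneg n)]
    norm_num
  have hproj : ∀ θ : X, Measurable (proj θ) := by
    intro θ
    exact (continuous_const.inner continuous_id).measurable
  refine ⟨?_, hMp, ?_, ?_⟩
  · intro n θ
    have h1 : (μs n).map (proj (θ : X)) =
        Measure.dirac (((n : ℝ) ^ ((1:ℝ)/3)) * (inner ℝ (θ : X) (b n) : ℝ)) := by
      rw [hμs n, Measure.map_dirac' (hproj _), proj, real_inner_smul_right]
    have h2 : μ.map (proj (θ : X)) = Measure.dirac (0 : ℝ) := by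
      rw [hμ, Measure.map_dirac' (hproj _), proj, inner_zero_right]
    rw [h1, h2, wp_two_dirac, Real.dist_eq, sub_zero]
    rw [Real.rpow_two, sq_abs, mul_pow, hpow n]
  · refine Tendsto.congr (fun n => (hMp n).symm) ?_
    exact (tendsto_rpow_atTop (by norm_num : (0:ℝ) < 2/3)).comp
      tendsto_natCast_atTop_atTop
  · intro h
    set f : BoundedContinuousFunction X ℝ :=
      BoundedContinuousFunction.ofNormedAddCommGroup (fun x => max 0 (1 - ‖x‖))
        (continuous_const.max (continuous_const.sub continuous_norm)) 1 (by
          intro x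
          rw [Real.norm_eq_abs, abs_of_nonneg (le_max_left _ _)]
          exact max_le one_pos.le (by linarith [norm_nonneg x])) with hf
    have hcoe : ∀ x : X, f x = max 0 (1 - ‖x‖) := fun x => rfl
    have hval : ∀ n : ℕ, ∫ x, f x ∂(μs n) = max 0 (1 - (n : ℝ) ^ ((1:ℝ)/3)) := by
      intro n
      rw [hμs n, integral_dirac, hcoe, norm_smul, Real.norm_eq_abs,
        abs_of_nonneg (hn13 n), b.orthonormal.1 n, mul_one]
    have hval0 : ∫ x, f x ∂μ = 1 := by
      rw [hμ, integral_dirac, hcoe]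
      simp
    have key := h f
    rw [hval0] at key
    have key2 : Tendsto (fun n : ℕ => ∫ x, f x ∂(μs n)) atTop (𝓝 0) := by
      refine Tendsto.congr' ?_ tendsto_const_nhds
      filter_upwards [eventually_ge_atTop 1] with n hn
      have h1n : (1:ℝ) ≤ (n : ℝ) ^ ((1:ℝ)/3) := by
        calc (1:ℝ) = (1:ℝ) ^ ((1:ℝ)/3) := (Real.one_rpow _).symm
          _ ≤ (n : ℝ) ^ ((1:ℝ)/3) :=
            Real.rpow_le_rpow zero_le_one (by exact_mod_cast hn) (by norm_num)
      exact ((hval n).trans (max_eq_left (by linarith))).symm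
    exact zero_ne_one (tendsto_nhds_unique key2 key)
end
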